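/- arXiv:2310.10274 — 2 statements merged into one kernel-verified Lean document; each statement's English description precedes it below -/
import Mathlib

section
/- Under the particle-filter transition setup, the Boers entropy estimator satisfies the upper bound of Theorem 4: for every index set B ⊆ Fin n, −Ĥ ≤ u(B), i.e. −(Real.log (∑ i, z i * w i) − ∑ i, v i * Real.log (z i * ∑ j, T i j * w j)) ≤ −Real.log (∑ i, z i * w i) + ∑ i ∉ B, v i * Real.log (m * z i) + ∑ i ∈ B, v i * Real.log (z i * ∑ j, T i j * w j). -/
/-! Since `w` is a probability vector and `T i j ≤ m`, each predictive likelihood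
`∑ j, T i j * w j` is at most `m`; by monotonicity of `log`, every term of `Ĥ` with `i ∉ B`
may therefore be replaced by `v i * log (m * z i)`. -/

open Finset Real

lemma Finset.sum_le_sum_compl_add_sum {ι M : Type*} [Fintype ι] [DecidableEq ι]
    [AddCommMonoid M] [PartialOrder M] [IsOrderedAddMonoid M] {f g : ι → M} (B : Finset ι)
    (h : ∀ i ∉ B, f i ≤ g i) :
    ∑ i, f i ≤ ∑ i ∈ Bᶜ, g i + ∑ i ∈ B, f i := by
  rw [← sum_compl_add_sum B f]
  gcongr with i hi
  exact h i (mem_compl.1 hi)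

lemma Finset.sum_mul_le_of_sum_eq_one {ι : Type*} {s : Finset ι} {f w : ι → ℝ} {m : ℝ}
    (hw : ∀ j ∈ s, 0 ≤ w j) (hw₁ : ∑ j ∈ s, w j = 1) (hf : ∀ j ∈ s, f j ≤ m) :
    ∑ j ∈ s, f j * w j ≤ m :=
  calc ∑ j ∈ s, f j * w j ≤ ∑ j ∈ s, m * w j :=
        sum_le_sum fun j hj => mul_le_mul_of_nonneg_right (hf j hj) (hw j hj)
    _ = m := by rw [← mul_sum, hw₁, mul_one]

theorem boers_entropy_upper_bound_general
    (n : ℕ)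
    (w v z : Fin n → ℝ) (T : Fin n → Fin n → ℝ) (m : ℝ)
    (hw : ∀ j, 0 ≤ w j) (hwsum : ∑ j, w j = 1)
    (hv : ∀ i, 0 ≤ v i)
    (hz : ∀ i, 0 < z i)
    (hTm : ∀ i j, T i j ≤ m)
    (hTw : ∀ i, 0 < ∑ j, T i j * w j)
    (B : Finset (Fin n)) :
    -(Real.log (∑ i, z i * w i) - ∑ i, v i * Real.log (z i * ∑ j, T i j * w j)) ≤
      -Real.log (∑ i, z i * w i)
        + ∑ i ∈ Bᶜ, v i * Real.log (m * z i)
        + ∑ i ∈ B, v i * Real.log (z i * ∑ j, T i j * w j) := by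
  have hTw_le (i : Fin n) : ∑ j, T i j * w j ≤ m :=
    sum_mul_le_of_sum_eq_one (fun j _ => hw j) hwsum fun j _ => hTm i j
  have hlog_le (i : Fin n) :
      v i * log (z i * ∑ j, T i j * w j) ≤ v i * log (m * z i) := by
    refine mul_le_mul_of_nonneg_left (log_le_log (mul_pos (hz i) (hTw i)) ?_) (hv i)
    rw [mul_comm m]
    exact mul_le_mul_of_nonneg_left (hTw_le i) (hz i).le
  have := sum_le_sum_compl_add_sum B fun i _ => hlog_le i
  linarith

/-- Theorem 4 (upper bound): under the particle-filter transition setup, for every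
index set `B ⊆ Fin n`, the negated Boers entropy estimator `-Ĥ` is bounded above
by the simplified upper bound `u(B)`. -/
theorem boers_entropy_upper_bound
    (n : ℕ) (hn : 1 ≤ n)
    (w v z : Fin n → ℝ) (T : Fin n → Fin n → ℝ) (m : ℝ)
    (hw : ∀ j, 0 ≤ w j) (hwsum : ∑ j, w j = 1)
    (hv : ∀ i, 0 ≤ v i)
    (hz : ∀ i, 0 < z i)
    (hm : 0 < m)
    (hT0 : ∀ i j, 0 ≤ T i j) (hTm : ∀ i j, T i j ≤ m)
    (hTw : ∀ i, 0 < ∑ j, T i j * w j)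
    (B : Finset (Fin n)) :
    -(Real.log (∑ i, z i * w i) - ∑ i, v i * Real.log (z i * ∑ j, T i j * w j)) ≤
      -Real.log (∑ i, z i * w i)
        + ∑ i ∈ Bᶜ, v i * Real.log (m * z i)
        + ∑ i ∈ B, v i * Real.log (z i * ∑ j, T i j * w j) :=
  boers_entropy_upper_bound_general n w v z T m hw hwsum hv hz hTm hTw B
end

section
/- Monotonicity of the upper entropy bound (part of Theorem 5): under the particle-filter transition setup, if B ⊆ B' are index sets in Fin n, then u(B') ≤ u(B); in particular the gap u(B) − (−Ĥ) is nonnegative and does not increase when the index set is enlarged. -/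
/-- Monotonicity of the upper entropy bound (part of Theorem 5): if `B ⊆ B'` then
`u(B') ≤ u(B)`; in particular the gap `u(B) - (-Ĥ)` is nonnegative and does not
increase when the index set is enlarged. -/
theorem boers_entropy_upper_bound_monotone
    (n : ℕ) (hn : 1 ≤ n)
    (w v z : Fin n → ℝ) (T : Fin n → Fin n → ℝ) (m : ℝ)
    (hw : ∀ j, 0 ≤ w j) (hwsum : ∑ j, w j = 1)
    (hv : ∀ i, 0 ≤ v i)
    (hz : ∀ i, 0 < z i)
    (hm : 0 < m)
    (hT0 : ∀ i j, 0 ≤ T i j) (hTm : ∀ i j, T i j ≤ m)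
    (hTw : ∀ i, 0 < ∑ j, T i j * w j)
    (B B' : Finset (Fin n)) (hBB' : B ⊆ B') :
    (-Real.log (∑ i, z i * w i)
        + ∑ i ∈ B'ᶜ, v i * Real.log (m * z i)
        + ∑ i ∈ B', v i * Real.log (z i * ∑ j, T i j * w j) ≤
      -Real.log (∑ i, z i * w i)
        + ∑ i ∈ Bᶜ, v i * Real.log (m * z i)
        + ∑ i ∈ B, v i * Real.log (z i * ∑ j, T i j * w j)) ∧
    (0 ≤ (-Real.log (∑ i, z i * w i)
        + ∑ i ∈ Bᶜ, v i * Real.log (m * z i)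
        + ∑ i ∈ B, v i * Real.log (z i * ∑ j, T i j * w j))
        - (-(Real.log (∑ i, z i * w i)
            - ∑ i, v i * Real.log (z i * ∑ j, T i j * w j)))) ∧
    ((-Real.log (∑ i, z i * w i)
        + ∑ i ∈ B'ᶜ, v i * Real.log (m * z i)
        + ∑ i ∈ B', v i * Real.log (z i * ∑ j, T i j * w j))
        - (-(Real.log (∑ i, z i * w i)
            - ∑ i, v i * Real.log (z i * ∑ j, T i j * w j))) ≤
      (-Real.log (∑ i, z i * w i)
        + ∑ i ∈ Bᶜ, v i * Real.log (m * z i)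
        + ∑ i ∈ B, v i * Real.log (z i * ∑ j, T i j * w j))
        - (-(Real.log (∑ i, z i * w i)
            - ∑ i, v i * Real.log (z i * ∑ j, T i j * w j)))) := by
  set a : Fin n → ℝ := fun i => v i * Real.log (m * z i) with ha
  set b : Fin n → ℝ := fun i => v i * Real.log (z i * ∑ j, T i j * w j) with hb
  have hba : ∀ i, b i ≤ a i := by
    intro i
    apply mul_le_mul_of_nonneg_left _ (hv i)
    apply Real.log_le_log (mul_pos (hz i) (hTw i))
    have : ∑ j, T i j * w j ≤ m := by
      calc ∑ j, T i j * w j ≤ ∑ j, m * w j :=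
            Finset.sum_le_sum fun j _ => mul_le_mul_of_nonneg_right (hTm i j) (hw j)
        _ = m := by rw [← Finset.mul_sum, hwsum, mul_one]
    calc z i * ∑ j, T i j * w j ≤ z i * m :=
          mul_le_mul_of_nonneg_left this (hz i).le
      _ = m * z i := mul_comm _ _
  have key : ∀ C D : Finset (Fin n), C ⊆ D →
      ∑ i ∈ Dᶜ, a i + ∑ i ∈ D, b i ≤ ∑ i ∈ Cᶜ, a i + ∑ i ∈ C, b i := by
    intro C D hCD
    have h1 : ∀ E : Finset (Fin n), ∑ i ∈ Eᶜ, a i + ∑ i ∈ E, b i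
        = ∑ i, a i - ∑ i ∈ E, (a i - b i) := by
      intro E
      have := Finset.sum_add_sum_compl E a
      simp [Finset.sum_sub_distrib]
      linarith [Finset.sum_add_sum_compl E a]
    rw [h1, h1]
    have : ∑ i ∈ C, (a i - b i) ≤ ∑ i ∈ D, (a i - b i) :=
      Finset.sum_le_sum_of_subset_of_nonneg hCD (fun i _ _ => sub_nonneg.2 (hba i))
    linarith
  have hmono := key B B' hBB'
  refine ⟨by linarith, ?_, by linarith⟩
  have hsplit : ∑ i, b i = ∑ i ∈ B, b i + ∑ i ∈ Bᶜ, b i :=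
    (Finset.sum_add_sum_compl B b).symm
  have hBc : ∑ i ∈ Bᶜ, b i ≤ ∑ i ∈ Bᶜ, a i :=
    Finset.sum_le_sum fun i _ => hba i
  linarith
end
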